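/- arXiv:1202.2822 — 5 statements merged into one kernel-verified Lean document; each statement's English description precedes it below -/
import Mathlib

section
/- The Chebyshev quadratic map q : [−2,2] → [−2,2], q(x) = x² − 2 (which indeed maps the interval [−2,2] into itself), has topological entropy equal to log 2. -/
open Dynamics

/-- The Chebyshev quadratic map `x ↦ x² - 2` on the interval `[-2, 2]`. -/
noncomputable def chebyshev : Set.Icc (-2 : ℝ) 2 → Set.Icc (-2 : ℝ) 2 :=
  fun x => ⟨x.1 ^ 2 - 2, by
    constructor
    · nlinarith [x.2.1, x.2.2]
    · nlinarith [x.2.1, x.2.2]⟩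

open Dynamics Set Filter Uniformity
open scoped SetRel

namespace ChebAux

/-- tent map on ℝ -/
noncomputable def tent (x : ℝ) : ℝ := 1 - |2*x - 1|

lemma tent_mapsTo : MapsTo tent (Icc (0:ℝ) 1) (Icc (0:ℝ) 1) := by
  intro x hx
  simp only [tent, mem_Icc] at *
  cases abs_cases (2*x - 1) with
  | inl h => constructor <;> nlinarith [h.1, h.2]
  | inr h => constructor <;> nlinarith [h.1, h.2]

lemma tent_lipschitz : LipschitzWith 2 tent := by
  apply LipschitzWith.of_dist_le_mul
  intro x y
  simp only [tent, Real.dist_eq, NNReal.coe_ofNat]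
  have h1 : (1 - |2*x - 1|) - (1 - |2*y - 1|) = |2*y-1| - |2*x-1| := by ring
  rw [h1]
  calc |(|2*y-1| - |2*x-1|)| ≤ |(2*y-1) - (2*x-1)| := abs_abs_sub_abs_le_abs_sub _ _
  _ = 2 * |x - y| := by rw [show (2*y-1) - (2*x-1) = -(2*(x-y)) by ring, abs_neg, abs_mul]; simp

noncomputable def g (b : Bool) (y : ℝ) : ℝ := if b then 1 - y/2 else y/2

noncomputable def pt (l : List Bool) : ℝ := l.foldr g (1/2)

@[simp] lemma pt_nil : pt [] = 1/2 := rfl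

@[simp] lemma pt_cons (b l) : pt (b :: l) = g b (pt l) := rfl

lemma pt_mem (l : List Bool) : pt l ∈ Icc (0:ℝ) 1 := by
  induction l with
  | nil => norm_num
  | cons b l ih =>
    rcases ih with ⟨h0, h1⟩
    cases b <;> simp [g] <;> constructor <;> linarith

lemma tent_g {b : Bool} {y : ℝ} (hy : y ∈ Icc (0:ℝ) 1) : tent (g b y) = y := by
  rcases hy with ⟨h0, h1⟩
  cases b
  · simp only [g, tent, if_false, Bool.false_eq_true]
    rw [abs_of_nonpos (by linarith)]; ring
  · simp only [g, tent, if_true]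
    rw [abs_of_nonneg (by linarith)]; ring

lemma tent_pt (b l) : tent (pt (b :: l)) = pt l := by
  rw [pt_cons, tent_g (pt_mem l)]

lemma tent_iter_pt (l₁ l₂ : List Bool) : tent^[l₁.length] (pt (l₁ ++ l₂)) = pt l₂ := by
  induction l₁ with
  | nil => simp
  | cons b l ih =>
    rw [List.length_cons, List.cons_append, Function.iterate_succ_apply, tent_pt, ih]

/-- length of the initial run of `false`s -/
def leadRun (l : List Bool) : ℕ := (l.takeWhile (fun b => !b)).length

@[simp] lemma leadRun_nil : leadRun [] = 0 := rfl
@[simp] lemma leadRun_true (l) : leadRun (true :: l) = 0 := rfl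
@[simp] lemma leadRun_false (l) : leadRun (false :: l) = leadRun l + 1 := by
  simp [leadRun, List.takeWhile]

lemma pt_ge (l : List Bool) : (1/2:ℝ)^(leadRun l + 1) ≤ pt l := by
  induction l with
  | nil => norm_num
  | cons b l ih =>
    cases b
    · simp only [leadRun_false, pt_cons, g, if_false, Bool.false_eq_true]
      calc (1/2:ℝ)^(leadRun l + 1 + 1) = (1/2)^(leadRun l + 1) / 2 := by ring
      _ ≤ pt l / 2 := by linarith
    · simp only [leadRun_true, pt_cons, g, if_true, pow_one]
      have := (pt_mem l).2
      linarith

lemma pt_le {l : List Bool} {K : ℕ} (h : leadRun l.tail ≤ K) :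
    pt l ≤ 1 - (1/2:ℝ)^(K+2) := by
  have hK : (1/2:ℝ)^(K+2) ≤ (1/2:ℝ)^2 :=
    pow_le_pow_of_le_one (by norm_num) (by norm_num) (by omega)
  have h2 : (1/2:ℝ)^2 = 1/4 := by norm_num
  match l with
  | [] => simp only [pt_nil]; nlinarith
  | false :: r =>
    have := (pt_mem r).2
    simp only [pt_cons, g, if_false, Bool.false_eq_true]
    nlinarith
  | true :: r =>
    simp only [pt_cons, g, if_true]
    have h1 : (1/2:ℝ)^(K+1) ≤ pt r := by
      refine le_trans ?_ (pt_ge r)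
      apply pow_le_pow_of_le_one (by norm_num) (by norm_num)
      simpa using h
    have : (1/2:ℝ)^(K+2) = (1/2)^(K+1)/2 := by ring
    linarith

lemma sep_core {r1 r2 : List Bool} {K : ℕ} (h : leadRun r2.tail ≤ K) :
    (1/2:ℝ)^(K+3) ≤ pt (true :: r2) - pt (false :: r1) := by
  have h2 := pt_le h
  have h1 := (pt_mem r1).2
  simp only [pt_cons, g, if_true, if_false, Bool.false_eq_true]
  have : (1/2:ℝ)^(K+3) = (1/2)^(K+2)/2 := by ring
  linarith

lemma leadRun_append_true (a b : List Bool) : leadRun (a ++ true :: b) ≤ a.length := by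
  induction a with
  | nil => simp
  | cons x a ih =>
    cases x
    · simpa using Nat.succ_le_succ ih
    · simp

lemma sep_inner (m : ℕ) : ∀ (c1 c2 d1 d2 : List Bool),
    c1.length = c2.length → c1 ≠ c2 →
    c1.length ≤ m → c2.length ≤ m →
    leadRun d1.tail ≤ m → leadRun d2.tail ≤ m →
    (∃ e1 : List Bool, d1 = true :: e1) → (∃ e2 : List Bool, d2 = true :: e2) →
    ∃ i < c1.length,
      (1/2:ℝ)^(m+3) ≤ |tent^[i] (pt (c1 ++ d1)) - tent^[i] (pt (c2 ++ d2))| := by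
  intro c1
  induction c1 with
  | nil =>
    intro c2 d1 d2 hlen hne _ _ _ _ _ _
    exact absurd (List.eq_nil_of_length_eq_zero hlen.symm).symm hne
  | cons b1 s1 ih =>
    intro c2 d1 d2 hlen hne hm1 hm2 hd1 hd2 he1 he2
    match c2 with
    | [] => simp at hlen
    | b2 :: s2 =>
      simp only [List.length_cons, Nat.succ_le_iff, Nat.add_right_cancel_iff] at hlen hm1 hm2
      by_cases hb : b1 = b2
      · subst hb
        have hs : s1 ≠ s2 := fun h => hne (by rw [h])
        obtain ⟨i, hi, hsep⟩ := ih s2 d1 d2 hlen hs (le_of_lt hm1) (le_of_lt hm2) hd1 hd2 he1 he2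
        refine ⟨i+1, by simpa using Nat.succ_lt_succ hi, ?_⟩
        rw [Function.iterate_succ_apply, Function.iterate_succ_apply,
          List.cons_append, List.cons_append, tent_pt, tent_pt]
        exact hsep
      · -- heads differ
        -- the key bound: leadRun ((s ++ d).tail) ≤ m for head-true side
        have key : ∀ (s d : List Bool), s.length ≤ m - 1 → leadRun d.tail ≤ m →
            (∃ e, d = true :: e) → leadRun (s ++ d).tail ≤ m := by
          intro s d hs hd ⟨e, he⟩
          match s with
          | [] => simpa using hd
          | x :: s' =>
            have : (x :: s' ++ d).tail = s' ++ d := rfl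
            have hs' : s'.length + 1 ≤ m - 1 := by simpa using hs
            rw [this, he]
            calc leadRun (s' ++ true :: e) ≤ s'.length := leadRun_append_true s' e
            _ ≤ m := by omega
        have habs : ∀ u v : ℝ, (1/2:ℝ)^(m+3) ≤ u - v → (1/2:ℝ)^(m+3) ≤ |v - u| := by
          intro u v h
          have hpos : (0:ℝ) < (1/2)^(m+3) := by positivity
          rw [abs_sub_comm, abs_of_nonneg (by linarith)]
          exact h
        refine ⟨0, Nat.succ_pos _, ?_⟩
        simp only [Function.iterate_zero_apply, List.cons_append]
        cases b1
        · cases b2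
          · exact absurd rfl hb
          · -- c1 false, c2 true
            have h2 : leadRun (s2 ++ d2).tail ≤ m := key s2 d2 (by omega) hd2 he2
            exact habs _ _ (sep_core h2)
        · cases b2
          · -- c1 true, c2 false
            have h1 : leadRun (s1 ++ d1).tail ≤ m := key s1 d1 (by omega) hd1 he1
            rw [abs_sub_comm]
            exact habs _ _ (sep_core h1)
          · exact absurd rfl hb

/-- encode a list of blocks, each followed by a `true` -/
def enc : List (List Bool) → List Bool
  | [] => []
  | c :: w => c ++ true :: enc w

lemma leadRun_enc {m : ℕ} : ∀ (w : List (List Bool)), (∀ c ∈ w, c.length = m) →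
    leadRun (enc w) ≤ m := by
  intro w hw
  match w with
  | [] => simp [enc, leadRun]
  | c :: w' =>
    have : leadRun (c ++ true :: enc w') ≤ c.length := leadRun_append_true _ _
    rw [enc]
    exact this.trans_eq (hw c (by simp))

lemma sep_outer (m : ℕ) (hm : 1 ≤ m) : ∀ (w1 w2 : List (List Bool)),
    w1.length = w2.length →
    (∀ c ∈ w1, c.length = m) → (∀ c ∈ w2, c.length = m) →
    w1 ≠ w2 →
    ∃ i < (m+1) * w1.length,
      (1/2:ℝ)^(m+3) ≤ |tent^[i] (pt (enc w1)) - tent^[i] (pt (enc w2))| := by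
  intro w1
  induction w1 with
  | nil =>
    intro w2 hlen _ _ hne
    exact absurd (List.eq_nil_of_length_eq_zero hlen.symm).symm hne
  | cons c1 w1' ih =>
    intro w2 hlen hb1 hb2 hne
    match w2 with
    | [] => simp at hlen
    | c2 :: w2' =>
      simp only [List.length_cons, Nat.add_right_cancel_iff] at hlen
      have hc1 : c1.length = m := hb1 c1 (by simp)
      have hc2 : c2.length = m := hb2 c2 (by simp)
      by_cases hc : c1 = c2
      · subst hc
        have hw : w1' ≠ w2' := fun h => hne (by rw [h])
        obtain ⟨i, hi, hsep⟩ := ih w2' hlen (fun c hc => hb1 c (by simp [hc]))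
          (fun c hc => hb2 c (by simp [hc])) hw
        refine ⟨i + (m+1), ?_, ?_⟩
        · rw [List.length_cons]
          calc i + (m+1) < (m+1) * w1'.length + (m+1) := by omega
          _ = (m+1) * (w1'.length + 1) := by ring
        · have hiter : ∀ w' : List (List Bool),
              tent^[m+1] (pt (enc (c1 :: w'))) = pt (enc w') := by
            intro w'
            have h1 : enc (c1 :: w') = (c1 ++ [true]) ++ enc w' := by
              simp [enc]
            have h2 : (c1 ++ [true]).length = m + 1 := by simp [hc1]
            rw [h1, ← h2, tent_iter_pt]
          rw [Function.iterate_add_apply tent i (m+1) (pt (enc (c1 :: w1'))),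
            Function.iterate_add_apply tent i (m+1) (pt (enc (c1 :: w2'))),
            hiter w1', hiter w2']
          exact hsep
      · -- differing first blocks
        obtain ⟨i, hi, hsep⟩ := sep_inner m c1 c2 (true :: enc w1') (true :: enc w2')
          (by rw [hc1, hc2]) hc (le_of_eq hc1) (le_of_eq hc2)
          (by simpa using leadRun_enc w1' (fun c hc => hb1 c (by simp [hc])))
          (by simpa using leadRun_enc w2' (fun c hc => hb2 c (by simp [hc])))
          ⟨_, rfl⟩ ⟨_, rfl⟩
        refine ⟨i, ?_, ?_⟩
        · rw [List.length_cons]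
          have : i < m := hc1 ▸ hi
          calc i < m + 1 := by omega
          _ ≤ (m+1) * (w1'.length + 1) := by nlinarith
        · rw [show enc (c1 :: w1') = c1 ++ (true :: enc w1') from rfl,
            show enc (c2 :: w2') = c2 ++ (true :: enc w2') from rfl]
          exact hsep

section Lower

variable {m N : ℕ}

/-- the point associated to a block word -/
noncomputable def P (m N : ℕ) (v : Fin N → Fin m → Bool) : ℝ :=
  pt (enc (List.ofFn (fun j => List.ofFn (v j))))

lemma P_sep (hm : 1 ≤ m) {v1 v2 : Fin N → Fin m → Bool} (hne : v1 ≠ v2) :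
    ∃ i < (m+1) * N, (1/2:ℝ)^(m+3) ≤ |tent^[i] (P m N v1) - tent^[i] (P m N v2)| := by
  have hL : (List.ofFn (fun j => List.ofFn (v1 j))).length = N := by simp
  have key := sep_outer m hm (List.ofFn (fun j => List.ofFn (v1 j)))
    (List.ofFn (fun j => List.ofFn (v2 j))) (by simp)
    (by intro c hc; rw [List.mem_ofFn] at hc; obtain ⟨j, rfl⟩ := hc; simp)
    (by intro c hc; rw [List.mem_ofFn] at hc; obtain ⟨j, rfl⟩ := hc; simp)
    (by
      intro h
      apply hne
      have h2 := List.ofFn_injective h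
      funext j
      exact List.ofFn_injective (congrFun h2 j))
  rw [hL] at key
  exact key

lemma P_inj (hm : 1 ≤ m) : Function.Injective (P m N) := by
  intro v1 v2 h
  by_contra hne
  obtain ⟨i, _, hsep⟩ := P_sep hm hne
  rw [h, sub_self, abs_zero] at hsep
  have : (0:ℝ) < (1/2)^(m+3) := by positivity
  linarith

lemma netMaxcard_tent_lower (hm : 1 ≤ m) (N : ℕ) :
    ((2:ℕ∞)^(m*N)) ≤ netMaxcard tent (Icc (0:ℝ) 1)
      {p : ℝ × ℝ | dist p.1 p.2 < (1/2:ℝ)^(m+3)/2} ((m+1)*N) := by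
  set ε : ℝ := (1/2:ℝ)^(m+3)/2 with hε
  have hεpos : 0 < ε := by positivity
  set s : Finset ℝ := Finset.image (P m N) Finset.univ with hs
  have hcard : s.card = 2^(m*N) := by
    rw [hs, Finset.card_image_of_injective _ (P_inj hm), Finset.card_univ]
    simp [pow_mul]
  have hnet : IsDynNetIn tent (Icc (0:ℝ) 1)
      {p : ℝ × ℝ | dist p.1 p.2 < ε} ((m+1)*N) (s : Set ℝ) := by
    constructor
    · intro x hx
      simp only [hs, Finset.coe_image, Finset.coe_univ, image_univ, mem_range] at hx
      obtain ⟨v, rfl⟩ := hx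
      exact pt_mem _
    · intro x hx y hy hxy
      simp only [hs, Finset.coe_image, Finset.coe_univ, image_univ, mem_range] at hx hy
      obtain ⟨v1, rfl⟩ := hx
      obtain ⟨v2, rfl⟩ := hy
      have hne : v1 ≠ v2 := fun h => hxy (by rw [h])
      obtain ⟨i, hi, hsep⟩ := P_sep hm hne
      simp only [Function.onFun]
      rw [Set.disjoint_left]
      intro z hz1 hz2
      simp only [UniformSpace.ball, Set.mem_preimage, mem_dynEntourage] at hz1 hz2
      have h1 := hz1 i hi
      have h2 := hz2 i hi
      simp only [mem_setOf_eq] at h1 h2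
      rw [Real.dist_eq] at h1 h2
      have : |tent^[i] (P m N v1) - tent^[i] (P m N v2)| < 2 * ε := by
        calc |tent^[i] (P m N v1) - tent^[i] (P m N v2)|
            ≤ |tent^[i] (P m N v1) - tent^[i] z| + |tent^[i] z - tent^[i] (P m N v2)| :=
              abs_sub_le _ _ _
        _ < ε + ε := by rw [abs_sub_comm] at h2; linarith
        _ = 2 * ε := by ring
      rw [hε] at this
      linarith [hsep]
  have := hnet.card_le_netMaxcard
  rw [hcard] at this
  exact_mod_cast this

open ENNReal EReal in
lemma tent_coverEntropy_lower :
    ((Real.log 2 : ℝ) : EReal) ≤ coverEntropy tent (Icc (0:ℝ) 1) := by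
  -- reduce to real c < log 2
  have main : ∀ c : ℝ, c < Real.log 2 → (c : EReal) ≤ coverEntropy tent (Icc (0:ℝ) 1) := by
    intro c hc
    -- choose m
    have hlog2 : 0 < Real.log 2 := Real.log_pos (by norm_num)
    obtain ⟨m, hm1, hmc⟩ : ∃ m : ℕ, 1 ≤ m ∧ c * (m+1) ≤ m * Real.log 2 := by
      rcases le_or_gt c 0 with h | h
      · exact ⟨1, le_refl 1, by nlinarith⟩
      · refine ⟨⌈c / (Real.log 2 - c)⌉₊ + 1, by omega, ?_⟩
        have h1 : c / (Real.log 2 - c) ≤ (⌈c / (Real.log 2 - c)⌉₊ + 1 : ℕ) := by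
          push_cast
          linarith [Nat.le_ceil (c / (Real.log 2 - c))]
        set M : ℝ := ((⌈c / (Real.log 2 - c)⌉₊ + 1 : ℕ) : ℝ)
        have h2 : c ≤ M * (Real.log 2 - c) := by
          rw [div_le_iff₀ (by linarith)] at h1
          linarith
        push_cast
        nlinarith
    set ε : ℝ := (1/2:ℝ)^(m+3)/2 with hε
    have hεpos : 0 < ε := by positivity
    set U : Set (ℝ × ℝ) := {p : ℝ × ℝ | dist p.1 p.2 < ε} with hU
    have hUuni : U ∈ 𝓤 ℝ := Metric.dist_mem_uniformity hεpos
    refine le_trans ?_ (netEntropyEntourage_le_coverEntropy tent (Icc (0:ℝ) 1) hUuni)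
    rw [netEntropyEntourage]
    apply le_limsup_of_frequently_le'
    rw [frequently_atTop]
    intro a
    refine ⟨(m+1)*(a+1), by nlinarith, ?_⟩
    set n : ℕ := (m+1)*(a+1) with hn
    set N : ℕ := a+1 with hN
    have hcard := netMaxcard_tent_lower hm1 N
    have hlog : ((m*N : ℕ) * (Real.log 2 : ℝ) : EReal)
        ≤ log (netMaxcard tent (Icc (0:ℝ) 1) U n) := by
      refine le_trans ?_ (log_monotone (ENat.toENNReal_mono hcard))
      have h1 : (((2:ℕ∞)^(m*N) : ℕ∞) : ℝ≥0∞) = (2:ℝ≥0∞)^(m*N) := by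
        push_cast; rfl
      rw [h1, log_pow]
      have h2 : log (2:ℝ≥0∞) = (Real.log 2 : EReal) := by
        rw [log_pos_real' (by norm_num)]
        norm_num
      rw [h2]
    have hnpos : (0:EReal) < (n : ℕ) := by
      have : 0 < n := by positivity
      exact_mod_cast this
    rw [le_div_iff_mul_le hnpos (natCast_ne_top n)]
    refine le_trans ?_ hlog
    have : ((c : EReal) * (n:ℕ)) = ((c * n : ℝ) : EReal) := by
      norm_cast
    rw [this]
    apply EReal.coe_le_coe_iff.2
    have hNn : (n:ℝ) = (m+1) * N := by rw [hn]; push_cast; ring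
    rw [hNn]
    have hNge : (0:ℝ) ≤ N := Nat.cast_nonneg N
    calc c * ((m+1) * N) = (c * (m+1)) * N := by ring
    _ ≤ (m * Real.log 2) * N := by apply mul_le_mul_of_nonneg_right hmc hNge
    _ = (m*N : ℕ) * Real.log 2 := by push_cast; ring
  -- conclude
  have htendR : Tendsto (fun k : ℕ => (Real.log 2 - 1/(k+1) : ℝ)) atTop
      (nhds (Real.log 2)) := by
    have h0 : Tendsto (fun k : ℕ => (1/(k+1) : ℝ)) atTop (nhds 0) :=
      tendsto_one_div_add_atTop_nhds_zero_nat
    simpa using (tendsto_const_nhds (x := Real.log 2)).sub h0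
  have htend : Tendsto (fun k : ℕ => ((Real.log 2 - 1/(k+1) : ℝ) : EReal)) atTop
      (nhds ((Real.log 2 : ℝ) : EReal)) := by
    exact (continuous_coe_real_ereal.tendsto _).comp htendR
  apply le_of_tendsto htend
  filter_upwards with k
  apply main
  have : (0:ℝ) < 1/(k+1) := by positivity
  linarith
end Lower
lemma tent_iter_dist (i : ℕ) (x y : ℝ) :
    dist (tent^[i] x) (tent^[i] y) ≤ 2^i * dist x y := by
  have := (tent_lipschitz.iterate i).dist_le_mul x y
  simpa using this

lemma exists_cover (ε : ℝ) (hε : 0 < ε) (n : ℕ) :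
    ∃ s : Finset ℝ, IsDynCoverOf tent (Icc (0:ℝ) 1) {p : ℝ × ℝ | dist p.1 p.2 < ε} n s ∧
      s.card ≤ (⌈2/ε⌉₊ + 1) * 2^n := by
  set δ : ℝ := ε / 2^(n+1) with hδ
  have hδpos : 0 < δ := by positivity
  set M : ℕ := ⌊2^(n+1)/ε⌋₊ with hM
  refine ⟨(Finset.range (M+1)).image (fun k : ℕ => (k : ℝ) * δ), ?_, ?_⟩
  · intro x hx
    rcases hx with ⟨hx0, hx1⟩
    set k : ℕ := ⌊x/δ⌋₊ with hk
    have hxδ : 0 ≤ x / δ := div_nonneg hx0 hδpos.le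
    have hkM : k ≤ M := by
      apply Nat.floor_le_floor
      have h1 : x / δ ≤ 1 / δ := by gcongr
      have h2 : 1 / δ = 2^(n+1)/ε := by rw [hδ, one_div_div]
      linarith
    have h1 : (k:ℝ) * δ ≤ x := by
      rw [← le_div_iff₀ hδpos]
      exact Nat.floor_le hxδ
    have h2 : x < ((k:ℝ) + 1) * δ := by
      rw [← div_lt_iff₀ hδpos]
      exact Nat.lt_floor_add_one _
    have hnear : |x - (k:ℝ)*δ| ≤ δ := by
      rw [abs_of_nonneg (by linarith)]
      nlinarith
    refine ⟨(k:ℝ)*δ, ?_, ?_⟩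
    · simp only [Finset.coe_image, Finset.coe_range, mem_image, mem_Iio]
      exact ⟨k, by omega, rfl⟩
    · rw [mem_dynEntourage]
      intro i hi
      simp only [mem_setOf_eq]
      rw [dist_comm]
      calc dist (tent^[i] ((k:ℝ)*δ)) (tent^[i] x) ≤ 2^i * dist ((k:ℝ)*δ) x :=
        tent_iter_dist i _ _
      _ ≤ 2^i * δ := by
        rw [Real.dist_eq, abs_sub_comm]
        exact mul_le_mul_of_nonneg_left hnear (by positivity)
      _ < ε := by
        rw [hδ]
        rw [div_eq_mul_inv, ← mul_assoc]
        have h2i : (2:ℝ)^i * ε ≤ 2^n * ε := by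
          have : (2:ℝ)^i ≤ 2^n := pow_le_pow_right₀ (by norm_num) hi.le
          nlinarith
        have hpow : (0:ℝ) < 2^(n+1) := by positivity
        rw [mul_inv_lt_iff₀ hpow]
        calc (2:ℝ)^i * ε ≤ 2^n * ε := h2i
        _ < ε * 2^(n+1) := by
          rw [pow_succ]
          nlinarith [pow_pos (show (0:ℝ) < 2 by norm_num) n]
  · calc ((Finset.range (M+1)).image (fun k : ℕ => (k : ℝ) * δ)).card
        ≤ M + 1 := (Finset.card_image_le).trans (by simp)
    _ ≤ ⌈2/ε⌉₊ * 2^n + 1 := by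
      have h1 : (2:ℝ)^(n+1)/ε ≤ ((⌈2/ε⌉₊ * 2^n : ℕ) : ℝ) := by
        push_cast
        calc (2:ℝ)^(n+1)/ε = (2/ε) * 2^n := by rw [pow_succ]; ring
        _ ≤ ⌈2/ε⌉₊ * 2^n := by
          apply mul_le_mul_of_nonneg_right (Nat.le_ceil _) (by positivity)
      have := Nat.floor_le_floor h1
      rw [Nat.floor_natCast] at this
      omega
    _ ≤ (⌈2/ε⌉₊ + 1) * 2^n := by
      have : 1 ≤ 2^n := Nat.one_le_two_pow
      nlinarith

open ENNReal EReal in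
lemma tent_coverEntropy_upper : coverEntropy tent (Icc (0:ℝ) 1) ≤ ((Real.log 2 : ℝ) : EReal) := by
  rw [coverEntropy]
  apply iSup₂_le
  intro U hU
  obtain ⟨ε, hεpos, hεU⟩ := Metric.mem_uniformity_dist.1 hU
  set V : Set (ℝ × ℝ) := {p : ℝ × ℝ | dist p.1 p.2 < ε/2} with hV
  have hVsymm : SetRel.IsSymm V := ⟨fun a b h => by simpa [hV, dist_comm] using h⟩
  have hVVU : V ○ V ⊆ U := by
    rintro ⟨a, c⟩ ⟨b, h1, h2⟩
    simp only [hV, mem_setOf_eq] at h1 h2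
    exact hεU (lt_of_le_of_lt (dist_triangle a b c) (by linarith))
  refine le_trans (coverEntropyEntourage_antitone tent (Icc (0:ℝ) 1) hVVU) ?_
  set C : ℕ := ⌈2/(ε/2)⌉₊ + 1 with hC
  have hCpos : 0 < C := by positivity
  -- the bounding sequence
  have key : ∀ n : ℕ, 0 < n → coverEntropyEntourage tent (Icc (0:ℝ) 1) (V ○ V)
      ≤ ((Real.log C * (1/n) + Real.log 2 : ℝ) : EReal) := by
    intro n hn
    obtain ⟨s, hs, hcard⟩ := exists_cover (ε/2) (by positivity) n
    refine le_trans (hs.coverEntropyEntourage_le_log_card_div tent_mapsTo hn.ne') ?_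
    have hlog : log (s.card : ℝ≥0∞) ≤ ((Real.log C + n * Real.log 2 : ℝ) : EReal) := by
      have h1 : log (s.card : ℝ≥0∞) ≤ log ((C * 2^n : ℕ) : ℝ≥0∞) := by
        apply log_monotone
        exact_mod_cast hcard
      refine h1.trans_eq ?_
      have h2 : ((C * 2^n : ℕ) : ℝ≥0∞).toReal = ((C:ℝ) * 2^n) := by
        simp
      rw [log_pos_real' (by rw [h2]; positivity), h2,
        Real.log_mul (by positivity) (by positivity), Real.log_pow]
    calc log (s.card : ℝ≥0∞) / (n : EReal)
        ≤ ((Real.log C + n * Real.log 2 : ℝ) : EReal) / (n : EReal) := by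
          apply monotone_div_right_of_nonneg (by exact_mod_cast Nat.zero_le n) hlog
    _ = ((Real.log C * (1/n) + Real.log 2 : ℝ) : EReal) := by
          have hn0 : (n:ℝ) ≠ 0 := Nat.cast_ne_zero.2 hn.ne'
          rw [← EReal.coe_coe_eq_natCast n, ← EReal.coe_div]
          congr 1
          field_simp
  -- take the limit
  have htendR : Tendsto (fun n : ℕ => (Real.log C * (1/n) + Real.log 2 : ℝ)) atTop
      (nhds (Real.log 2)) := by
    have h0 : Tendsto (fun n : ℕ => (1/n : ℝ)) atTop (nhds 0) := tendsto_one_div_atTop_nhds_zero_nat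
    have := (h0.const_mul (Real.log C)).add (tendsto_const_nhds (x := Real.log 2))
    simpa using this
  have htend : Tendsto (fun n : ℕ => ((Real.log C * (1/n) + Real.log 2 : ℝ) : EReal)) atTop
      (nhds ((Real.log 2 : ℝ) : EReal)) :=
    (continuous_coe_real_ereal.tendsto _).comp htendR
  apply ge_of_tendsto htend
  filter_upwards [eventually_gt_atTop 0] with n hn
  exact key n hn

noncomputable def Q (x : ℝ) : ℝ := x^2 - 2
noncomputable def conj (x : ℝ) : ℝ := 2 * Real.cos (Real.pi * x)
noncomputable def conjInv (y : ℝ) : ℝ := Real.arccos (y/2) / Real.pi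

lemma semiconj_conj : Function.Semiconj conj tent Q := by
  intro x
  simp only [conj, tent, Q]
  have h1 : Real.pi * (1 - |2*x - 1|) = Real.pi - |Real.pi * (2*x-1)| := by
    rw [abs_mul, abs_of_pos Real.pi_pos]
    ring
  rw [h1, Real.cos_pi_sub, Real.cos_abs,
    show Real.pi * (2*x-1) = 2*(Real.pi*x) - Real.pi by ring,
    Real.cos_sub_pi, Real.cos_two_mul]
  ring

lemma semiconj_conjInv : Function.Semiconj conjInv Q tent := by
  intro y
  set θ := Real.arccos (y/2) with hθ
  have hθ0 : 0 ≤ θ := Real.arccos_nonneg _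
  have hθπ : θ ≤ Real.pi := Real.arccos_le_pi _
  have hπ : (0:ℝ) < Real.pi := Real.pi_pos
  -- RHS
  have hR : tent (conjInv y) = (Real.pi - |2*θ - Real.pi|) / Real.pi := by
    simp only [tent, conjInv, ← hθ]
    rw [show 2*(θ/Real.pi) - 1 = (2*θ - Real.pi)/Real.pi by field_simp,
      abs_div, abs_of_pos hπ]
    field_simp
  have hRmem : 0 ≤ Real.pi - |2*θ - Real.pi| ∧ Real.pi - |2*θ - Real.pi| ≤ Real.pi := by
    constructor
    · cases abs_cases (2*θ - Real.pi) with
      | inl h => rw [h.1]; linarith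
      | inr h => rw [h.1]; linarith
    · have : 0 ≤ |2*θ - Real.pi| := abs_nonneg _
      linarith
  have hcosR : Real.cos (Real.pi - |2*θ - Real.pi|) = 2 * (Real.cos θ)^2 - 1 := by
    rw [Real.cos_pi_sub, Real.cos_abs,
      show 2*θ - Real.pi = 2*θ - Real.pi from rfl, Real.cos_sub_pi, Real.cos_two_mul]
    ring
  have key : Real.arccos (Q y / 2) = Real.pi - |2*θ - Real.pi| := by
    rcases le_or_gt (|y|) 2 with h | h
    · have hy1 : -1 ≤ y/2 := by cases abs_le.1 h; linarith
      have hy2 : y/2 ≤ 1 := by cases abs_le.1 h; linarith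
      have hcos : Real.cos θ = y/2 := Real.cos_arccos hy1 hy2
      have : Q y / 2 = Real.cos (Real.pi - |2*θ - Real.pi|) := by
        rw [hcosR, hcos, Q]; ring
      rw [this, Real.arccos_cos hRmem.1 hRmem.2]
    · -- |y| > 2
      have hQ : 1 ≤ Q y / 2 := by
        have : 2 < |y| := h
        have h2 : 4 < y^2 := by nlinarith [abs_nonneg y, sq_abs y]
        simp only [Q]; linarith
      rw [Real.arccos_eq_zero.2 hQ]
      rcases lt_or_ge 2 y with hy | hy
      · have : θ = 0 := Real.arccos_eq_zero.2 (by linarith)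
        rw [this]
        rw [abs_of_nonpos (by linarith)]
        ring
      · have hy' : y < -2 := by
          rcases abs_cases y with h' | h'
          · linarith [h'.1]
          · linarith [h'.1]
        have : θ = Real.pi := Real.arccos_eq_pi.2 (by linarith)
        rw [this, abs_of_nonneg (by linarith)]
        ring
  simp only [conjInv, Q] at *
  rw [hR, key]

lemma Q_mapsTo : MapsTo Q (Icc (-2:ℝ) 2) (Icc (-2:ℝ) 2) := by
  intro x hx
  simp only [Q, mem_Icc] at *
  constructor <;> nlinarith [hx.1, hx.2]

lemma conj_image : conj '' (Icc (0:ℝ) 1) = Icc (-2:ℝ) 2 := by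
  apply Subset.antisymm
  · rintro y ⟨x, _, rfl⟩
    simp only [conj, mem_Icc]
    constructor
    · nlinarith [Real.neg_one_le_cos (Real.pi * x)]
    · nlinarith [Real.cos_le_one (Real.pi * x)]
  · intro y hy
    rcases hy with ⟨hy1, hy2⟩
    have hπ : (0:ℝ) < Real.pi := Real.pi_pos
    refine ⟨Real.arccos (y/2) / Real.pi, ⟨?_, ?_⟩, ?_⟩
    · exact div_nonneg (Real.arccos_nonneg _) hπ.le
    · rw [div_le_one hπ]; exact Real.arccos_le_pi _
    · simp only [conj]
      rw [mul_div_cancel₀ _ (ne_of_gt hπ), Real.cos_arccos (by linarith) (by linarith)]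
      ring

lemma conjInv_image : conjInv '' (Icc (-2:ℝ) 2) = Icc (0:ℝ) 1 := by
  have hπ : (0:ℝ) < Real.pi := Real.pi_pos
  apply Subset.antisymm
  · rintro x ⟨y, _, rfl⟩
    simp only [conjInv, mem_Icc]
    constructor
    · exact div_nonneg (Real.arccos_nonneg _) hπ.le
    · rw [div_le_one hπ]; exact Real.arccos_le_pi _
  · intro x hx
    rcases hx with ⟨hx0, hx1⟩
    refine ⟨2 * Real.cos (Real.pi * x), ⟨?_, ?_⟩, ?_⟩
    · nlinarith [Real.neg_one_le_cos (Real.pi * x)]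
    · nlinarith [Real.cos_le_one (Real.pi * x)]
    · simp only [conjInv]
      rw [show 2 * Real.cos (Real.pi * x) / 2 = Real.cos (Real.pi * x) by ring,
        Real.arccos_cos (by positivity) (by nlinarith)]
      field_simp

lemma Q_coverEntropy : coverEntropy Q (Icc (-2:ℝ) 2) = ((Real.log 2 : ℝ) : EReal) := by
  have hUCconj : UniformContinuousOn conj (Icc (0:ℝ) 1) :=
    isCompact_Icc.uniformContinuousOn_of_continuous
      (Continuous.continuousOn (by
        unfold conj
        exact continuous_const.mul (Real.continuous_cos.comp (continuous_const.mul continuous_id))))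
  have hUCconjInv : UniformContinuousOn conjInv (Icc (-2:ℝ) 2) :=
    isCompact_Icc.uniformContinuousOn_of_continuous
      (Continuous.continuousOn (by
        unfold conjInv
        exact (Real.continuous_arccos.comp (continuous_id.div_const 2)).div_const _))
  apply le_antisymm
  · have h := coverEntropy_image_le_of_uniformContinuousOn_invariant semiconj_conj
      hUCconj (Subset.refl (Icc (0:ℝ) 1)) tent_mapsTo
    rw [conj_image] at h
    exact h.trans tent_coverEntropy_upper
  · have h := coverEntropy_image_le_of_uniformContinuousOn_invariant semiconj_conjInv
      hUCconjInv (Subset.refl (Icc (-2:ℝ) 2)) Q_mapsTo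
    rw [conjInv_image] at h
    exact tent_coverEntropy_lower.trans h
end ChebAux

open Dynamics

theorem chebyshev_coverEntropy_eq_log_two :
    coverEntropy chebyshev (Set.univ : Set (Set.Icc (-2 : ℝ) 2)) =
      ((Real.log 2 : ℝ) : EReal) := by
  have hres : chebyshev = ChebAux.Q_mapsTo.restrict ChebAux.Q (Set.Icc (-2:ℝ) 2) (Set.Icc (-2:ℝ) 2) := by
    funext x
    apply Subtype.ext
    rfl
  rw [hres, coverEntropy_restrict ChebAux.Q_mapsTo, ChebAux.Q_coverEntropy]
end

section
/- Let a ∈ (−2, −7/4) and let q_a : ℝ → ℝ be the quadratic map q_a(x) = x² + a. Let A = (1 − √(1−4a))/2 and A' = (1 + √(1−4a))/2 be its two fixed points, so that A < 0 < −A < A'. Then for every x ∈ [−A', A'] there exists an integer n ≥ 0 such that q_a^n(x) = A' or q_a^n(x) ∈ [A, −A]. -/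
theorem quadratic_points_reach_core (a : ℝ) (ha : a ∈ Set.Ioo (-2 : ℝ) (-7/4)) :
    ∀ x ∈ Set.Icc (-((1 + Real.sqrt (1 - 4 * a)) / 2)) ((1 + Real.sqrt (1 - 4 * a)) / 2),
      ∃ n : ℕ,
        (fun t : ℝ => t ^ 2 + a)^[n] x = (1 + Real.sqrt (1 - 4 * a)) / 2 ∨
        (fun t : ℝ => t ^ 2 + a)^[n] x ∈
          Set.Icc ((1 - Real.sqrt (1 - 4 * a)) / 2) (-((1 - Real.sqrt (1 - 4 * a)) / 2)) := by
  obtain ⟨ha1, ha2⟩ := ha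
  set s := Real.sqrt (1 - 4 * a) with hs
  have hs2 : s ^ 2 = 1 - 4 * a := Real.sq_sqrt (by linarith)
  have hs0 : 0 ≤ s := Real.sqrt_nonneg _
  have hs_lt3 : s < 3 := by nlinarith
  have hs_gt2 : 2 < s := by nlinarith
  set q : ℝ → ℝ := fun t : ℝ => t ^ 2 + a with hq
  set A : ℝ := (1 - s) / 2 with hA
  set A' : ℝ := (1 + s) / 2 with hA'
  have hAneg : A < 0 := by rw [hA]; linarith
  have hA'pos : 0 < A' := by rw [hA']; linarith
  have hAA' : -A < A' := by rw [hA, hA']; linarith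
  have hfix : ∀ y : ℝ, q y - y = (y - A) * (y - A') := by
    intro y
    simp only [hq, hA, hA']
    linear_combination hs2 / 4
  have hmap : ∀ y : ℝ, -A < y → y < A' → A < q y ∧ q y < A' := by
    intro y h1 h2
    have hy0 : 0 < y := by linarith
    constructor
    · simp only [hq, hA] at h1 ⊢
      nlinarith
    · simp only [hq, hA'] at h2 ⊢
      nlinarith
  have hmap2 : ∀ y : ℝ, -A' < y → y < A → A < q y ∧ q y < A' := by
    intro y h1 h2
    have h := hmap (-y) (by linarith) (by linarith)
    have heq : q (-y) = q y := by simp only [hq]; ring_nf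
    rwa [heq] at h
  have key : ∀ x : ℝ, -A < x → x < A' → ∃ n : ℕ, q^[n] x ∈ Set.Icc A (-A) := by
    intro x hx1 hx2
    set δ := (s - 1) * (A' - x) with hδ
    have hδpos : 0 < δ := mul_pos (by linarith) (by linarith)
    have main : ∀ k : ℕ, (∃ j : ℕ, q^[j] x ∈ Set.Icc A (-A)) ∨
        (q^[k] x ∈ Set.Ioo (-A) A' ∧ q^[k] x ≤ x - k * δ) := by
      intro k
      induction k with
      | zero =>
        right
        simp only [Function.iterate_zero_apply, Nat.cast_zero]
        exact ⟨⟨hx1, hx2⟩, by linarith⟩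
      | succ k ih =>
        rcases ih with h | ⟨⟨h1, h2⟩, h3⟩
        · left; exact h
        · set y := q^[k] x with hy
          have hstep : q^[k+1] x = q y := Function.iterate_succ_apply' q k x
          obtain ⟨hqy1, hqy2⟩ := hmap y h1 h2
          have hkδ : (0:ℝ) ≤ (k : ℝ) * δ := by positivity
          have hyx : y ≤ x := by linarith
          have h4 : s - 1 ≤ y - A := by rw [hA] at h1 ⊢; linarith
          have h5 : A' - x ≤ A' - y := by linarith
          have hprod : (s - 1) * (A' - x) ≤ (y - A) * (A' - y) :=
            mul_le_mul h4 h5 (by linarith) (by linarith)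
          have hring : (y - A) * (y - A') = -((y - A) * (A' - y)) := by ring
          have hdec : q y ≤ y - δ := by
            have hf := hfix y
            rw [hring] at hf
            rw [hδ]
            linarith
          by_cases hc : q y ≤ -A
          · left
            exact ⟨k + 1, by rw [hstep]; exact ⟨le_of_lt hqy1, hc⟩⟩
          · right
            rw [hstep]
            refine ⟨⟨lt_of_not_ge hc, hqy2⟩, ?_⟩
            push_cast
            linarith
    obtain ⟨n, hn⟩ := exists_nat_gt ((x + A) / δ)
    rcases main n with ⟨j, hj⟩ | ⟨⟨h1, _⟩, h3⟩
    · exact ⟨j, hj⟩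
    · exfalso
      have : x + A < n * δ := by
        rw [div_lt_iff₀ hδpos] at hn
        linarith
      linarith
  intro x hx
  obtain ⟨hx1, hx2⟩ := hx
  rcases le_or_gt x (-A) with hle | hgt
  · rcases le_or_gt A x with hge | hlt
    · -- x ∈ [A, -A]
      exact ⟨0, Or.inr ⟨hge, hle⟩⟩
    · -- x < A
      rcases eq_or_lt_of_le hx1 with heq | hgt'
      · -- x = -A'
        refine ⟨1, Or.inl ?_⟩
        rw [Function.iterate_one]
        simp only [hq, ← heq]
        rw [hA']
        linear_combination hs2 / 4
      · -- -A' < x < A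
        obtain ⟨hq1, hq2⟩ := hmap2 x hgt' hlt
        rcases le_or_gt (q x) (-A) with hle2 | hgt2
        · exact ⟨1, Or.inr ⟨le_of_lt hq1, hle2⟩⟩
        · obtain ⟨n, hn⟩ := key (q x) hgt2 hq2
          refine ⟨n + 1, Or.inr ?_⟩
          rw [Function.iterate_succ_apply]
          exact hn
  · -- x > -A
    rcases eq_or_lt_of_le hx2 with heq | hlt
    · exact ⟨0, Or.inl heq⟩
    · obtain ⟨n, hn⟩ := key x hgt hlt
      exact ⟨n, Or.inr hn⟩
end

section
/- Let V be a countable set, Π ⊆ V × V, and let Ω ⊆ V^ℤ be the space of two-sided paths, i.e. sequences (v_i)_{i∈ℤ} with (v_i, v_{i+1}) ∈ Π for all i, endowed with the topology induced by the product of the discrete topology on V, and let σ : Ω → Ω be the left shift. Suppose there exists a vertex e ∈ V such that: (i) for every integer ℓ ≥ 2 there is a finite path u_0 = e, u_1, …, u_ℓ = e with (u_j, u_{j+1}) ∈ Π for all 0 ≤ j < ℓ; and (ii) for every (v_i)_{i∈ℤ} ∈ Ω the set {i ∈ ℤ : v_i = e} is unbounded above and unbounded below. Then σ is topologically mixing on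 Ω: for all nonempty open sets U, U' ⊆ Ω there exists N such that for every k ≥ N, σ^k(U) ∩ U' ≠ ∅. -/
/-- The left shift on the two-sided path space of a countable Markov graph. -/
def pathShift {V : Type*} {P : Set (V × V)}
    (v : {v : ℤ → V // ∀ i : ℤ, (v i, v (i + 1)) ∈ P}) :
    {v : ℤ → V // ∀ i : ℤ, (v i, v (i + 1)) ∈ P} :=
  ⟨fun i => v.1 (i + 1), fun i => v.2 (i + 1)⟩

lemma pathShift_iter {V : Type*} {P : Set (V × V)}
    (k : ℕ) (w : {v : ℤ → V // ∀ i : ℤ, (v i, v (i + 1)) ∈ P}) (i : ℤ) :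
    ((pathShift (P := P))^[k] w).1 i = w.1 (i + k) := by
  induction k generalizing i with
  | zero => simp
  | succ k ih =>
    rw [Function.iterate_succ_apply']
    show ((pathShift (P := P))^[k] w).1 (i + 1) = _
    rw [ih]
    congr 1
    push_cast
    ring_nf

theorem markov_shift_topologically_mixing
    {V : Type*} [Countable V] [TopologicalSpace V] [DiscreteTopology V]
    (P : Set (V × V)) (e : V)
    (hloop : ∀ ℓ : ℕ, 2 ≤ ℓ →
      ∃ u : ℕ → V, u 0 = e ∧ u ℓ = e ∧ ∀ j < ℓ, (u j, u (j + 1)) ∈ P)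
    (hrec : ∀ v : {v : ℤ → V // ∀ i : ℤ, (v i, v (i + 1)) ∈ P}, ∀ n : ℤ,
      (∃ i : ℤ, n ≤ i ∧ v.1 i = e) ∧ (∃ i : ℤ, i ≤ n ∧ v.1 i = e)) :
    ∀ U U' : Set {v : ℤ → V // ∀ i : ℤ, (v i, v (i + 1)) ∈ P},
      IsOpen U → IsOpen U' → U.Nonempty → U'.Nonempty →
      ∃ N : ℕ, ∀ k ≥ N, ((pathShift (P := P))^[k] '' U ∩ U').Nonempty := by
  intro U U' hU hU' ⟨x, hx⟩ ⟨y, hy⟩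
  -- unpack open sets as preimages of product-open sets
  obtain ⟨O, hO, rfl⟩ := isOpen_induced_iff.mp hU
  obtain ⟨O', hO', rfl⟩ := isOpen_induced_iff.mp hU'
  obtain ⟨I, us, hus, hIsub⟩ := isOpen_pi_iff.mp hO x.1 hx
  obtain ⟨I', us', hus', hIsub'⟩ := isOpen_pi_iff.mp hO' y.1 hy
  -- bound the finite coordinate sets
  obtain ⟨M, hM⟩ := Finset.exists_le I
  obtain ⟨m, hm⟩ := Finset.exists_le (α := ℤᵒᵈ) I'
  -- find recurrence times
  obtain ⟨a, haM, hae⟩ := (hrec x M).1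
  obtain ⟨b, hbm, hbe⟩ := (hrec y m).2
  refine ⟨(a - b + 2).toNat, fun k hk => ?_⟩
  have hk' : a - b + 2 ≤ (k : ℤ) := le_trans (Int.self_le_toNat _) (by exact_mod_cast hk)
  set L : ℕ := ((k : ℤ) + b - a).toNat with hLdef
  have hL : (L : ℤ) = (k : ℤ) + b - a := Int.toNat_of_nonneg (by omega)
  have hL2 : 2 ≤ L := by omega
  obtain ⟨u, hu0, huL, huP⟩ := hloop L hL2
  -- the connecting path
  set zf : ℤ → V := fun i =>
    if i ≤ a then x.1 i else if i < a + L then u (i - a).toNat else y.1 (i - k) with hzf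
  have hmid : ∀ i : ℤ, a ≤ i → i ≤ a + L → zf i = u (i - a).toNat := by
    intro i h1 h2
    by_cases h3 : i ≤ a
    · have : i = a := le_antisymm h3 h1
      subst this
      simp [hzf, hae, hu0]
    · by_cases h4 : i < a + L
      · simp [hzf, h3, h4]
      · have hi : i = a + L := by omega
        have : zf i = y.1 (i - k) := by simp [hzf, h3, h4]
        rw [this, hi]
        have : a + (L : ℤ) - k = b := by omega
        rw [this, hbe]
        have : (a + (L : ℤ) - a).toNat = L := by omega
        rw [this, huL]
  have hzP : ∀ i : ℤ, (zf i, zf (i + 1)) ∈ P := by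
    intro i
    by_cases h1 : i + 1 ≤ a
    · have hia : i ≤ a := by omega
      have e1 : zf i = x.1 i := by simp [hzf, hia]
      have e2 : zf (i + 1) = x.1 (i + 1) := by simp [hzf, h1]
      rw [e1, e2]
      exact x.2 i
    · by_cases h2 : i < a + L
      · have hia : a ≤ i := by omega
        rw [hmid i hia (by omega), hmid (i + 1) (by omega) (by omega)]
        have : (i + 1 - a).toNat = (i - a).toNat + 1 := by omega
        rw [this]
        exact huP _ (by omega)
      · have hge : a + (L : ℤ) ≤ i := by omega
        have hna : ¬ i ≤ a := by omega
        have hna1 : ¬ i + 1 ≤ a := by omega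
        have : zf i = y.1 (i - k) := by simp [hzf, hna, h2]
        rw [this]
        have : zf (i + 1) = y.1 (i - k + 1) := by
          have h5 : ¬ i + 1 < a + (L : ℤ) := by omega
          have : i + 1 - k = i - k + 1 := by ring
          simp [hzf, hna1, h5, this]
        rw [this]
        exact y.2 (i - k)
  refine ⟨(pathShift (P := P))^[k] ⟨zf, hzP⟩, ⟨⟨zf, hzP⟩, ?_, rfl⟩, ?_⟩
  · -- z ∈ U
    apply hIsub
    intro i hi
    have : zf i = x.1 i := by
      simp [hzf, show i ≤ a by have := hM i hi; omega]
    show zf i ∈ us i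
    rw [this]
    exact (hus i hi).2
  · -- σ^k z ∈ U'
    apply hIsub'
    intro j hj
    have hjb : b ≤ j := le_trans hbm (hm j hj)
    show ((pathShift (P := P))^[k] ⟨zf, hzP⟩).1 j ∈ us' j
    rw [pathShift_iter]
    show zf (j + (k : ℤ)) ∈ us' j
    have hna : ¬ j + k ≤ a := by omega
    have hnl : ¬ j + (k : ℤ) < a + L := by omega
    have : zf (j + k) = y.1 (j + k - k) := by simp [hzf, hna, hnl]
    rw [this]
    have : j + (k : ℤ) - k = j := by ring
    rw [this]
    exact (hus' j hj).2
end

section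
/- Let M be an integer with M ≥ 1000 and set ε = M^{−1/2}. Let P : ℕ → ℝ be a sequence of nonnegative reals with P(0) = P(1) = 0, P(n) = 2 for 2 ≤ n ≤ M, and P(n) ≤ 2 · Σ_{k=2}^{n−M−1} P(k) for every n ≥ M+1 (the sum being empty, hence zero, when n − M − 1 < 2). Then P(n) ≤ 2·e^{ε n} for every n ≥ 0. -/
theorem loop_count_bound (M : ℕ) (hM : 1000 ≤ M) (P : ℕ → ℝ)
    (hnonneg : ∀ n, 0 ≤ P n)
    (h0 : P 0 = 0) (h1 : P 1 = 0)
    (hsmall : ∀ n, 2 ≤ n → n ≤ M → P n = 2)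
    (hrec : ∀ n, M + 1 ≤ n → P n ≤ 2 * ∑ k ∈ Finset.Icc 2 (n - M - 1), P k) :
    ∀ n : ℕ, P n ≤ 2 * Real.exp ((n : ℝ) / Real.sqrt M) := by
  have hM' : (1000 : ℝ) ≤ (M : ℝ) := by exact_mod_cast hM
  set s := Real.sqrt (M : ℝ) with hs
  have hspos : 0 < s := Real.sqrt_pos.mpr (by linarith)
  have hss : s * s = (M : ℝ) := Real.mul_self_sqrt (by linarith)
  have hkey : 2 * s ≤ Real.exp s := by
    have h1' : 1 + s / 2 ≤ Real.exp (s / 2) := by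
      have := Real.add_one_le_exp (s / 2); linarith
    have hes : Real.exp s = Real.exp (s / 2) * Real.exp (s / 2) := by
      rw [← Real.exp_add]; ring_nf
    nlinarith [Real.exp_pos (s / 2), sq_nonneg (1 - s / 2)]
  intro n
  induction n using Nat.strong_induction_on with
  | _ n ih =>
    rcases le_or_gt n M with hn | hn
    · rcases Nat.lt_or_ge n 2 with h2 | h2
      · interval_cases n
        · rw [h0]; positivity
        · rw [h1]; positivity
      · rw [hsmall n h2 hn]
        have : (1 : ℝ) ≤ Real.exp ((n : ℝ) / s) :=
          Real.one_le_exp (by positivity)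
        linarith
    · have hn' : M + 1 ≤ n := hn
      set m := n - M - 1 with hm
      have hmn : m + 1 = n - M := by omega
      have hcast : ((m : ℝ) + 1) = (n : ℝ) - (M : ℝ) := by
        have h1 : ((m + 1 : ℕ) : ℝ) = ((n - M : ℕ) : ℝ) := by rw [hmn]
        push_cast [Nat.cast_sub (by omega : M ≤ n)] at h1
        linarith
      set r := Real.exp (1 / s) with hr
      have hrpos : 0 < r := Real.exp_pos _
      have hr1 : 1 + 1 / s ≤ r := by
        have := Real.add_one_le_exp (1 / s); linarith
      have hrne : r ≠ 1 := by
        have : 0 < 1 / s := by positivity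
        intro h; rw [h] at hr1; linarith
      have hrk : ∀ k : ℕ, Real.exp ((k : ℝ) / s) = r ^ k := by
        intro k
        rw [hr, ← Real.exp_nat_mul]
        congr 1; ring
      have step1 : P n ≤ 2 * ∑ k ∈ Finset.Icc 2 m, P k := hrec n hn'
      have step2 : ∑ k ∈ Finset.Icc 2 m, P k ≤ ∑ k ∈ Finset.Icc 2 m, 2 * r ^ k := by
        apply Finset.sum_le_sum
        intro k hk
        have hkm : k ≤ m := (Finset.mem_Icc.mp hk).2
        have := ih k (by omega)
        rwa [hrk k] at this
      have step3 : ∑ k ∈ Finset.Icc 2 m, 2 * r ^ k ≤ 2 * ∑ k ∈ Finset.range (m + 1), r ^ k := by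
        rw [← Finset.mul_sum]
        have hsub : Finset.Icc 2 m ⊆ Finset.range (m + 1) := by
          intro k hk
          simp only [Finset.mem_Icc] at hk
          simp only [Finset.mem_range]
          omega
        have := Finset.sum_le_sum_of_subset_of_nonneg hsub
          (fun k _ _ => le_of_lt (pow_pos hrpos k))
        linarith
      have step4 : ∑ k ∈ Finset.range (m + 1), r ^ k ≤ s * r ^ (m + 1) := by
        rw [geom_sum_eq hrne]
        have hsinv : (0:ℝ) < 1 / s := by positivity
        rw [div_le_iff₀ (by linarith : (0:ℝ) < r - 1)]
        have hpow : (0:ℝ) < r ^ (m + 1) := pow_pos hrpos _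
        have h1s : 1 / s ≤ r - 1 := by linarith
        have : r ^ (m + 1) = s * r ^ (m + 1) * (1 / s) := by
          field_simp
        nlinarith [mul_le_mul_of_nonneg_left h1s (by positivity : (0:ℝ) ≤ s * r ^ (m + 1))]
      have hrm : r ^ (m + 1) = Real.exp (((n : ℝ) - (M : ℝ)) / s) := by
        rw [← hrk (m + 1)]
        push_cast
        rw [hcast]
      have hMs : (M : ℝ) / s = s := by
        field_simp
        linarith [hss]
      have hexp : Real.exp ((n : ℝ) / s) =
          Real.exp (((n : ℝ) - (M : ℝ)) / s) * Real.exp s := by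
        have hadd : ((n : ℝ) - (M : ℝ)) / s + (M : ℝ) / s = (n : ℝ) / s := by
          rw [← add_div]; ring_nf
        rw [← hadd, Real.exp_add, hMs]
      have hEpos : 0 < Real.exp (((n : ℝ) - (M : ℝ)) / s) := Real.exp_pos _
      calc P n ≤ 2 * ∑ k ∈ Finset.Icc 2 m, P k := step1
        _ ≤ 2 * (2 * ∑ k ∈ Finset.range (m + 1), r ^ k) := by linarith
        _ ≤ 2 * (2 * (s * r ^ (m + 1))) := by
            have := step4
            nlinarith
        _ = 4 * s * Real.exp (((n : ℝ) - (M : ℝ)) / s) := by rw [hrm]; ring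
        _ ≤ 2 * Real.exp ((n : ℝ) / s) := by
            rw [hexp]
            nlinarith [hEpos, hkey]
end

section
/- Let A be a countable set, let w : A → ℕ be a weight function with w(a) ≥ 1 for every a ∈ A, and let s > 0 be a real number such that Σ_{a∈A} e^{−s·w(a)} ≤ 1/2. Then for every integer p ≥ 1, the set of nonempty finite words (a_1, …, a_k) over A with total weight Σ_{i=1}^k w(a_i) = p is finite and has cardinality at most e^{s·p}. -/
lemma ncard_biUnion_le' {ι α : Type*} (F : Finset ι) (t : ι → Set α) :
    (⋃ a ∈ F, t a).ncard ≤ ∑ a ∈ F, (t a).ncard := by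
  classical
  induction F using Finset.induction with
  | empty => simp
  | @insert b G hb ih =>
    rw [Finset.set_biUnion_insert, Finset.sum_insert hb]
    exact (Set.ncard_union_le _ _).trans (Nat.add_le_add le_rfl ih)

theorem weighted_word_count_bound {A : Type*} [Countable A]
    (w : A → ℕ) (hw : ∀ a, 1 ≤ w a) (s : ℝ) (hs : 0 < s)
    (hsummable : Summable (fun a : A => Real.exp (-(s * (w a : ℝ)))))
    (hsum : ∑' a : A, Real.exp (-(s * (w a : ℝ))) ≤ 1 / 2) :
    ∀ p : ℕ, 1 ≤ p →
      {l : List A | l ≠ [] ∧ (l.map w).sum = p}.Finite ∧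
      (({l : List A | l ≠ [] ∧ (l.map w).sum = p}.ncard : ℝ) ≤ Real.exp (s * p)) := by
  classical
  -- only finitely many letters have weight ≤ p
  have hfin : ∀ p : ℕ, {a : A | w a ≤ p}.Finite := by
    intro p
    have h0 : (0 : ℝ) < Real.exp (-(s * p)) := Real.exp_pos _
    have h := hsummable.tendsto_cofinite_zero.eventually (gt_mem_nhds h0)
    rw [Filter.eventually_cofinite] at h
    refine h.subset ?_
    intro a ha
    simp only [Set.mem_setOf_eq, not_lt]
    exact Real.exp_le_exp.2 (by nlinarith [(Nat.cast_le (α := ℝ)).2 (ha : w a ≤ p), hs.le])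
  have main : ∀ p : ℕ, {l : List A | (l.map w).sum = p}.Finite ∧
      (({l : List A | (l.map w).sum = p}.ncard : ℝ) ≤ Real.exp (s * p)) := by
    intro p
    induction p using Nat.strong_induction_on with
    | _ p IH =>
    rcases Nat.eq_zero_or_pos p with rfl | hp
    · have hset : {l : List A | (l.map w).sum = 0} = {[]} := by
        ext l
        simp only [Set.mem_setOf_eq, Set.mem_singleton_iff]
        constructor
        · intro h
          cases l with
          | nil => rfl
          | cons a t => simp at h; have := hw a; omega
        · rintro rfl; simp
      rw [hset]
      refine ⟨Set.finite_singleton _, ?_⟩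
      rw [Set.ncard_singleton, Nat.cast_zero, mul_zero, Real.exp_zero, Nat.cast_one]
    · set F := (hfin p).toFinset with hF
      have hmemF : ∀ a, a ∈ F ↔ w a ≤ p := fun a => (hfin p).mem_toFinset
      have hdecomp : {l : List A | (l.map w).sum = p} =
          ⋃ a ∈ F, (List.cons a) '' {l | (l.map w).sum = p - w a} := by
        ext l
        simp only [Set.mem_setOf_eq, Set.mem_iUnion, Set.mem_image, exists_prop]
        constructor
        · intro h
          cases l with
          | nil => simp at h; omega
          | cons a t =>
            simp only [List.map_cons, List.sum_cons] at h
            exact ⟨a, (hmemF a).2 (by omega), t, by omega, rfl⟩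
        · rintro ⟨a, ha, t, ht, rfl⟩
          have haw : w a ≤ p := (hmemF a).1 ha
          simp only [List.map_cons, List.sum_cons]
          omega
      have hlt : ∀ a ∈ F, p - w a < p := fun a _ => Nat.sub_lt hp (hw a)
      have hfinI : ∀ a ∈ F, ((List.cons a) '' {l : List A | (l.map w).sum = p - w a}).Finite :=
        fun a ha => ((IH _ (hlt a ha)).1).image _
      constructor
      · rw [hdecomp]; exact Set.Finite.biUnion F.finite_toSet hfinI
      · have hcard1 : {l : List A | (l.map w).sum = p}.ncard ≤
            ∑ a ∈ F, {l : List A | (l.map w).sum = p - w a}.ncard := by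
          rw [hdecomp]
          refine (ncard_biUnion_le' F _).trans (le_of_eq ?_)
          refine Finset.sum_congr rfl fun a _ => ?_
          exact Set.ncard_image_of_injective _ (fun x y h => by injection h)
        have hcast : ({l : List A | (l.map w).sum = p}.ncard : ℝ) ≤
            ∑ a ∈ F, ({l : List A | (l.map w).sum = p - w a}.ncard : ℝ) := by
          exact_mod_cast hcard1
        refine hcast.trans ?_
        have hstep : ∀ a ∈ F, ({l : List A | (l.map w).sum = p - w a}.ncard : ℝ) ≤
            Real.exp (s * p) * Real.exp (-(s * w a)) := by
          intro a ha
          have haw : w a ≤ p := (hmemF a).1 ha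
          refine (IH _ (hlt a ha)).2.trans (le_of_eq ?_)
          rw [← Real.exp_add]
          congr 1
          have : ((p - w a : ℕ) : ℝ) = (p : ℝ) - (w a : ℝ) := by
            push_cast [haw]; ring
          rw [this]; ring
        refine (Finset.sum_le_sum hstep).trans ?_
        rw [← Finset.mul_sum]
        have hsumF : ∑ a ∈ F, Real.exp (-(s * w a)) ≤ 1 / 2 :=
          le_trans (Summable.sum_le_tsum F (fun a _ => (Real.exp_pos _).le) hsummable) hsum
        nlinarith [Real.exp_pos (s * p), mul_le_mul_of_nonneg_left hsumF (Real.exp_pos (s * p)).le]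
  intro p hp
  have hset : {l : List A | l ≠ [] ∧ (l.map w).sum = p} = {l : List A | (l.map w).sum = p} := by
    ext l
    simp only [Set.mem_setOf_eq, and_iff_right_iff_imp]
    intro h
    rintro rfl
    simp at h; omega
  rw [hset]
  exact main p
end
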